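/- Let k, l be nonzero real numbers with 2|k| < |k-l|, and let s₁, s₂, s₃ ≥ 0 with s := s₁ + s₂. Then 1 ≤ ⟨1/(k-l)⟩^s |k-l|^s ≤ C ⟨1/l⟩^{s₃} ⟨1/(k-l)⟩^{s₃} (1 + ⟨1/k⟩^{s - 2s₃}) |k-l|^{s₁} |l|^{s₂}, where ⟨1/x⟩ := (1 + |x|^{-2})^{1/2} and C depends only on s₁, s₂, s₃. -/

import Mathlib

/-!
In the region `2|k| < |k - l|` one has `|k| ≤ |k - l|` and `|k - l|/2 ≤ |l| ≤ 3|k - l|/2`.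
The weight `⟨1/x⟩` is decreasing in `|x|` and grows by at most a factor `c ≥ 1` when `|x|`
shrinks by that factor, so `⟨1/(k-l)⟩ ≤ ⟨1/k⟩` and `⟨1/(k-l)⟩ ≤ (3/2) ⟨1/l⟩`. Writing
`⟨1/(k-l)⟩^s = ⟨1/(k-l)⟩^{s₃} ⟨1/(k-l)⟩^{s₃} ⟨1/(k-l)⟩^{s-2s₃}`, the first factor is traded for
`⟨1/l⟩^{s₃}` and the last one is at most `1 + ⟨1/k⟩^{s-2s₃}` whatever the sign of `s - 2s₃`
(it is `≤ 1` for a nonpositive exponent); `|k - l|^{s₂} ≤ 2^{s₂} |l|^{s₂}` finishes, with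
`C = (3/2)^{s₃} 2^{s₂}`.
-/

open Real

/-- The weight `⟨1/x⟩ = (1 + x⁻²)^{1/2}`; at `x = 0` it takes the junk value `1` since `0⁻¹ = 0`. -/
noncomputable def japaneseBracketInv (x : ℝ) : ℝ := √(1 + x⁻¹ ^ 2)

lemma one_le_japaneseBracketInv (x : ℝ) : 1 ≤ japaneseBracketInv x :=
  Real.one_le_sqrt.mpr (le_add_of_nonneg_right (sq_nonneg _))

lemma japaneseBracketInv_mul_abs {x : ℝ} (hx : x ≠ 0) :
    japaneseBracketInv x * |x| = √(x ^ 2 + 1) := by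
  rw [japaneseBracketInv, ← Real.sqrt_sq_eq_abs, ← Real.sqrt_mul (by positivity)]
  congr 1
  field_simp

lemma one_le_japaneseBracketInv_rpow_mul_abs_rpow {x s : ℝ} (hx : x ≠ 0) (hs : 0 ≤ s) :
    1 ≤ japaneseBracketInv x ^ s * |x| ^ s := by
  rw [← Real.mul_rpow (zero_le_one.trans (one_le_japaneseBracketInv x)) (abs_nonneg x),
    japaneseBracketInv_mul_abs hx]
  exact Real.one_le_rpow (Real.one_le_sqrt.mpr (le_add_of_nonneg_left (sq_nonneg x))) hs

lemma japaneseBracketInv_le_mul {x y c : ℝ} (hc : 1 ≤ c) (hy : y ≠ 0) (h : |y| ≤ c * |x|) :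
    japaneseBracketInv x ≤ c * japaneseBracketInv y := by
  have hc₀ : 0 ≤ c := zero_le_one.trans hc
  have hx : x ≠ 0 := by
    rintro rfl
    simp only [abs_zero, mul_zero] at h
    exact hy (abs_nonpos_iff.mp h)
  have hyx : y ^ 2 ≤ c ^ 2 * x ^ 2 := by
    rw [← sq_abs y, ← sq_abs x, ← mul_pow]
    exact pow_le_pow_left₀ (abs_nonneg y) h 2
  have hinv : x⁻¹ ^ 2 ≤ c ^ 2 * y⁻¹ ^ 2 := by
    rw [inv_pow, inv_pow, ← div_eq_mul_inv, le_div_iff₀ (by positivity),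
      inv_mul_eq_div, div_le_iff₀ (by positivity)]
    linarith
  rw [japaneseBracketInv, japaneseBracketInv, ← Real.sqrt_sq hc₀, ← Real.sqrt_mul (sq_nonneg c)]
  apply Real.sqrt_le_sqrt
  nlinarith [one_le_pow₀ (n := 2) hc]

lemma japaneseBracketInv_le_of_abs_le {x y : ℝ} (hx : x ≠ 0) (h : |x| ≤ |y|) :
    japaneseBracketInv y ≤ japaneseBracketInv x := by
  simpa only [one_mul] using japaneseBracketInv_le_mul le_rfl hx (by rwa [one_mul])

lemma rpow_le_one_add_rpow {a b : ℝ} (ha : 1 ≤ a) (hab : a ≤ b) (t : ℝ) :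
    a ^ t ≤ 1 + b ^ t := by
  rcases le_or_gt t 0 with ht | ht
  · linarith [Real.rpow_le_one_of_one_le_of_nonpos ha ht,
      Real.rpow_nonneg (zero_le_one.trans (ha.trans hab)) t]
  · linarith [Real.rpow_le_rpow (zero_le_one.trans ha) hab ht.le, zero_le_one (α := ℝ)]

lemma rpow_add_mul_rpow_add_le {B K L D Λ a b s₁ s₂ s₃ : ℝ} (hB : 1 ≤ B) (hBK : B ≤ K)
    (ha : 0 ≤ a) (hL : 0 ≤ L) (hBL : B ≤ a * L) (hD : 0 < D) (hb : 0 ≤ b) (hΛ : 0 ≤ Λ)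
    (hDΛ : D ≤ b * Λ) (hs₂ : 0 ≤ s₂) (hs₃ : 0 ≤ s₃) :
    B ^ (s₁ + s₂) * D ^ (s₁ + s₂) ≤
      a ^ s₃ * b ^ s₂ * (L ^ s₃ * B ^ s₃ * (1 + K ^ (s₁ + s₂ - 2 * s₃)) * D ^ s₁ * Λ ^ s₂) := by
  have hB₀ : 0 < B := zero_lt_one.trans_le hB
  calc B ^ (s₁ + s₂) * D ^ (s₁ + s₂)
      = B ^ s₃ * B ^ s₃ * B ^ (s₁ + s₂ - 2 * s₃) * D ^ s₁ * D ^ s₂ := by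
        rw [← Real.rpow_add hB₀, ← Real.rpow_add hB₀, Real.rpow_add hD]
        ring_nf
    _ ≤ (a * L) ^ s₃ * B ^ s₃ * (1 + K ^ (s₁ + s₂ - 2 * s₃)) * D ^ s₁ * (b * Λ) ^ s₂ := by
        have := Real.rpow_nonneg (hB₀.le.trans hBK) (s₁ + s₂ - 2 * s₃)
        gcongr
        exact rpow_le_one_add_rpow hB hBK _
    _ = a ^ s₃ * b ^ s₂ * (L ^ s₃ * B ^ s₃ * (1 + K ^ (s₁ + s₂ - 2 * s₃)) * D ^ s₁ * Λ ^ s₂) := by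
        rw [Real.mul_rpow ha hL, Real.mul_rpow hb hΛ]
        ring

theorem stmt_3 (s₁ s₂ s₃ : ℝ) (hs₁ : 0 ≤ s₁) (hs₂ : 0 ≤ s₂) (hs₃ : 0 ≤ s₃) :
    ∃ C : ℝ, 0 < C ∧
      ∀ k l : ℝ, k ≠ 0 → l ≠ 0 → 2 * |k| < |k - l| →
        (1 : ℝ) ≤ Real.sqrt (1 + (k - l)⁻¹ ^ 2) ^ (s₁ + s₂) * |k - l| ^ (s₁ + s₂) ∧
        Real.sqrt (1 + (k - l)⁻¹ ^ 2) ^ (s₁ + s₂) * |k - l| ^ (s₁ + s₂) ≤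
          C * (Real.sqrt (1 + l⁻¹ ^ 2) ^ s₃ * Real.sqrt (1 + (k - l)⁻¹ ^ 2) ^ s₃ *
            (1 + Real.sqrt (1 + k⁻¹ ^ 2) ^ (s₁ + s₂ - 2 * s₃)) *
            |k - l| ^ s₁ * |l| ^ s₂) := by
  refine ⟨(3 / 2) ^ s₃ * 2 ^ s₂, by positivity, fun k l hk hl hkl => ?_⟩
  have hk_le : |k| ≤ |k - l| := by linarith [abs_nonneg k]
  have hl_le : |l| ≤ 3 / 2 * |k - l| := by
    linarith [abs_sub_abs_le_abs_sub l k, abs_sub_comm k l]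
  have hkl_le : |k - l| ≤ 2 * |l| := by linarith [abs_sub k l]
  have hkl₀ : k - l ≠ 0 := abs_pos.mp (by linarith [abs_nonneg k])
  exact ⟨one_le_japaneseBracketInv_rpow_mul_abs_rpow hkl₀ (add_nonneg hs₁ hs₂),
    rpow_add_mul_rpow_add_le (one_le_japaneseBracketInv _)
      (japaneseBracketInv_le_of_abs_le hk hk_le)
      (by norm_num) (zero_le_one.trans (one_le_japaneseBracketInv l))
      (japaneseBracketInv_le_mul (by norm_num) hl hl_le)
      (abs_pos.mpr hkl₀) zero_le_two (abs_nonneg l) hkl_le hs₂ hs₃⟩
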